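/- Let h: ℝ^{k×p} → (−∞, ∞] be the indicator function of the consensus set {X ∈ ℝ^{k×p} : X_1 = X_2 = ⋯ = X_k} (rows equal), let D be a diagonal positive definite matrix of size kp, and write a_{i,j} for the diagonal entry of D⁻¹ corresponding to row i, coordinate j. Then for any X ∈ ℝ^{k×p} and γ > 0, the scaled proximal operator prox^{D⁻¹}_{γh}(X) equals z·1_k^T, where z ∈ ℝ^p is the weighted average z_j = (∑_{i=1}^k a_{i,j} X_{i,j}) / (∑_{i=1}^k a_{i,j}); i.e., each row of prox^{D⁻¹}_{γh}(X) equals z. -/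

import Mathlib

open Finset Classical
open scoped RealInnerProductSpace

noncomputable section

/-- The indicator (in the `EReal` sense) of the consensus set `{X : X_1 = ⋯ = X_k}`. -/
def consensusIndicator {k p : ℕ} (X : Fin k → EuclideanSpace ℝ (Fin p)) : EReal :=
  if ∀ i i' : Fin k, X i = X i' then (0 : EReal) else ⊤

/-- The squared scaled norm `‖V‖²_{D⁻¹} = ∑_{i,j} a_{i,j} V_{i,j}²` on `ℝ^{k×p}`,
where `a_{i,j}` are the diagonal entries of `D⁻¹`. -/
def scaledSq {k p : ℕ} (a : Fin k → Fin p → ℝ) (V : Fin k → EuclideanSpace ℝ (Fin p)) : ℝ :=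
  ∑ i, ∑ j, a i j * (V i j) ^ 2

/-- `Z = prox^{D⁻¹}_{γ h}(X)` for the consensus indicator `h`:
`Z` minimizes `W ↦ h(W) + (1/(2γ)) ‖X − W‖²_{D⁻¹}`. -/
def IsConsensusProx {k p : ℕ} (a : Fin k → Fin p → ℝ) (γ : ℝ)
    (X Z : Fin k → EuclideanSpace ℝ (Fin p)) : Prop :=
  ∀ W : Fin k → EuclideanSpace ℝ (Fin p),
    consensusIndicator Z + ((1 / (2 * γ) * scaledSq a (X - Z) : ℝ) : EReal)
      ≤ consensusIndicator W + ((1 / (2 * γ) * scaledSq a (X - W) : ℝ) : EReal)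

/-! Subtracting the `a`-weighted column means `z` leaves every column of `X` orthogonal to the
constants in the `a`-weighted inner product. Hence, writing `Z` for the matrix with all rows `z`,
Pythagoras gives `‖X - W‖²_a = ‖X - Z‖²_a + ‖W - Z‖²_a` for every consensus matrix `W`, while
off the consensus set the objective is `⊤`. -/

lemma exists_eq_const_of_forall_eq {ι α : Type*} [Nonempty α] {f : ι → α}
    (hf : ∀ i i', f i = f i') : ∃ c, f = fun _ => c := by
  rcases isEmpty_or_nonempty ι with hι | ⟨⟨i₀⟩⟩
  · exact ⟨Classical.arbitrary α, funext isEmptyElim⟩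
  · exact ⟨f i₀, funext fun i => hf i i₀⟩

lemma sum_mul_sub_weightedMean {ι : Type*} (s : Finset ι) {w x : ι → ℝ}
    (hw : ∀ i ∈ s, 0 ≤ w i) :
    ∑ i ∈ s, w i * (x i - (∑ i ∈ s, w i * x i) / ∑ i ∈ s, w i) = 0 := by
  rcases eq_or_ne (∑ i ∈ s, w i) 0 with h | h
  · have hw0 := (sum_eq_zero_iff_of_nonneg hw).1 h
    exact sum_eq_zero fun i hi => by rw [hw0 i hi, zero_mul]
  · simp only [mul_sub, sum_sub_distrib, ← sum_mul, mul_div_cancel₀ _ h, sub_self]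

section ScaledSq

variable {k p : ℕ} {a : Fin k → Fin p → ℝ}

lemma consensusIndicator_const (w : EuclideanSpace ℝ (Fin p)) :
    consensusIndicator (fun _ : Fin k => w) = 0 := by
  simp [consensusIndicator]

lemma exists_eq_const_of_consensusIndicator_add_ne_top {W : Fin k → EuclideanSpace ℝ (Fin p)}
    {r : ℝ} (h : consensusIndicator W + r ≠ ⊤) : ∃ w, W = fun _ => w := by
  unfold consensusIndicator at h
  split_ifs at h with hW
  · exact exists_eq_const_of_forall_eq hW
  · exact absurd (EReal.top_add_coe r) h

lemma scaledSq_nonneg (ha : ∀ i j, 0 ≤ a i j) (V : Fin k → EuclideanSpace ℝ (Fin p)) :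
    0 ≤ scaledSq a V :=
  sum_nonneg fun i _ => sum_nonneg fun j _ => mul_nonneg (ha i j) (sq_nonneg _)

lemma eq_zero_of_scaledSq_nonpos (ha : ∀ i j, 0 < a i j)
    {V : Fin k → EuclideanSpace ℝ (Fin p)} (hV : scaledSq a V ≤ 0) : V = 0 := by
  have hterm : ∀ i j, a i j * V i j ^ 2 = 0 := by
    have hnonneg : ∀ i j, 0 ≤ a i j * V i j ^ 2 :=
      fun i j => mul_nonneg (ha i j).le (sq_nonneg _)
    have hrow := (sum_eq_zero_iff_of_nonneg fun i _ => sum_nonneg fun j _ => hnonneg i j).1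
      (le_antisymm hV (scaledSq_nonneg (fun i j => (ha i j).le) V))
    exact fun i j => (sum_eq_zero_iff_of_nonneg fun j _ => hnonneg i j).1 (hrow i (mem_univ i)) j
      (mem_univ j)
  funext i
  ext j
  simpa [(ha i j).ne'] using hterm i j

lemma scaledSq_sub_const (ha : ∀ i j, 0 ≤ a i j) (X : Fin k → EuclideanSpace ℝ (Fin p))
    {z : EuclideanSpace ℝ (Fin p)} (hz : ∀ j, z j = (∑ i, a i j * X i j) / ∑ i, a i j)
    (w : EuclideanSpace ℝ (Fin p)) :
    scaledSq a (X - fun _ => w) = scaledSq a (X - fun _ => z) + scaledSq a (fun _ => w - z) := by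
  have horth : ∑ i, ∑ j, a i j * (X i j - z j) * (w j - z j) = 0 := by
    rw [sum_comm]
    refine sum_eq_zero fun j _ => ?_
    rw [← sum_mul, hz j, sum_mul_sub_weightedMean _ fun i _ => ha i j, zero_mul]
  simp only [scaledSq, Pi.sub_apply, PiLp.sub_apply]
  calc ∑ i, ∑ j, a i j * (X i j - w j) ^ 2
      = ∑ i, ∑ j, (a i j * (X i j - z j) ^ 2 + a i j * (w j - z j) ^ 2
          - 2 * (a i j * (X i j - z j) * (w j - z j))) :=
        sum_congr rfl fun i _ => sum_congr rfl fun j _ => by ring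
    _ = _ := by
        simp only [sum_add_distrib, sum_sub_distrib, ← mul_sum, horth, mul_zero, sub_zero]

lemma scaledSq_sub_weightedMean_le (ha : ∀ i j, 0 ≤ a i j)
    (X : Fin k → EuclideanSpace ℝ (Fin p))
    {z : EuclideanSpace ℝ (Fin p)} (hz : ∀ j, z j = (∑ i, a i j * X i j) / ∑ i, a i j)
    (w : EuclideanSpace ℝ (Fin p)) :
    scaledSq a (X - fun _ => z) ≤ scaledSq a (X - fun _ => w) := by
  rw [scaledSq_sub_const ha X hz w]
  exact le_add_of_nonneg_right (scaledSq_nonneg ha _)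

lemma const_eq_weightedMean_of_scaledSq_sub_le (ha : ∀ i j, 0 < a i j)
    (X : Fin k → EuclideanSpace ℝ (Fin p)) {z : EuclideanSpace ℝ (Fin p)}
    (hz : ∀ j, z j = (∑ i, a i j * X i j) / ∑ i, a i j) {w : EuclideanSpace ℝ (Fin p)}
    (hw : scaledSq a (X - fun _ => w) ≤ scaledSq a (X - fun _ => z)) :
    (fun _ => w : Fin k → EuclideanSpace ℝ (Fin p)) = fun _ => z := by
  rw [scaledSq_sub_const (fun i j => (ha i j).le) X hz w, add_le_iff_nonpos_right] at hw
  funext i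
  exact sub_eq_zero.1 (congr_fun (eq_zero_of_scaledSq_nonpos ha hw) i)

end ScaledSq

theorem consensus_scaled_prox_general
    {k p : ℕ}
    (a : Fin k → Fin p → ℝ) (ha : ∀ i j, 0 < a i j)
    (γ : ℝ) (hγ : 0 < γ)
    (X : Fin k → EuclideanSpace ℝ (Fin p))
    (z : EuclideanSpace ℝ (Fin p))
    (hz : ∀ j, z j = (∑ i, a i j * X i j) / (∑ i, a i j)) :
    IsConsensusProx a γ X (fun _ => z) ∧
      ∀ W, IsConsensusProx a γ X W → W = fun _ => z := by
  have hc : 0 < 1 / (2 * γ) := by positivity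
  refine ⟨fun W => ?_, fun W hW => ?_⟩
  · by_cases htop :
        consensusIndicator W + ((1 / (2 * γ) * scaledSq a (X - W) : ℝ) : EReal) = ⊤
    · exact htop ▸ le_top
    obtain ⟨w, rfl⟩ := exists_eq_const_of_consensusIndicator_add_ne_top htop
    simp only [consensusIndicator_const, zero_add, EReal.coe_le_coe_iff]
    exact mul_le_mul_of_nonneg_left
      (scaledSq_sub_weightedMean_le (fun i j => (ha i j).le) X hz w) hc.le
  · have hle := hW fun _ => z
    obtain ⟨w, rfl⟩ := exists_eq_const_of_consensusIndicator_add_ne_top <|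
      ne_top_of_le_ne_top (by rw [consensusIndicator_const, zero_add]; exact EReal.coe_ne_top _) hle
    simp only [consensusIndicator_const, zero_add, EReal.coe_le_coe_iff] at hle
    exact const_eq_weightedMean_of_scaledSq_sub_le ha X hz (le_of_mul_le_mul_left hle hc)

/-- The scaled proximal operator of the consensus indicator is the
`D⁻¹`-weighted average of the rows: `prox^{D⁻¹}_{γh}(X) = z 1ᵀ` with
`z_j = (∑ i a_{i,j} X_{i,j}) / (∑ i a_{i,j})`. -/
theorem consensus_scaled_prox
    {k p : ℕ} (hk : 0 < k)
    (a : Fin k → Fin p → ℝ) (ha : ∀ i j, 0 < a i j)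
    (γ : ℝ) (hγ : 0 < γ)
    (X : Fin k → EuclideanSpace ℝ (Fin p))
    (z : EuclideanSpace ℝ (Fin p))
    (hz : ∀ j, z j = (∑ i, a i j * X i j) / (∑ i, a i j)) :
    IsConsensusProx a γ X (fun _ => z) ∧
      ∀ W, IsConsensusProx a γ X W → W = fun _ => z :=
  consensus_scaled_prox_general a ha γ hγ X z hz
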